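/- Let G and H be ordered graphs on [n], and let 1 ≤ a_1 ≤ b_1 < a_2 ≤ b_2 < a_3 ≤ b_3 ≤ n. If G − a_i = H − b_i for each i ∈ {1,2,3}, then G = H. -/

import Mathlib

namespace OrderedGraphs

/-- The order-preserving map `Fin (n-1) → Fin n` that skips the vertex `v`. -/
def delMap {n : ℕ} (v : Fin n) (i : Fin (n - 1)) : Fin n :=
  if h : (i : ℕ) < (v : ℕ) then ⟨i, lt_trans h v.isLt⟩
  else ⟨(i : ℕ) + 1, by have h1 := i.isLt; have h2 := v.isLt; omega⟩

/-- `erase G v` is the ordered graph `G − v` on `[n-1]`, obtained by deleting `v` and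
relabelling the remaining vertices order-preservingly. -/
def erase {n : ℕ} (G : SimpleGraph (Fin n)) (v : Fin n) : SimpleGraph (Fin (n - 1)) where
  Adj i j := G.Adj (delMap v i) (delMap v j)
  symm := ⟨fun i j h => G.adj_symm h⟩
  loopless := ⟨fun i h => G.irrefl h⟩

/-- The shadow `∂G` of a single ordered graph. -/
def shadow {n : ℕ} (G : SimpleGraph (Fin n)) : Set (SimpleGraph (Fin (n - 1))) :=
  {H | ∃ v : Fin n, H = erase G v}

/-- The shadow `∂𝒢` of a collection of ordered graphs. -/
def shadowCol {n : ℕ} (𝒢 : Set (SimpleGraph (Fin n))) : Set (SimpleGraph (Fin (n - 1))) :=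
  ⋃ G ∈ 𝒢, shadow G

/-- `x ∼ y` : the relation `Γ(x) \ {y} = Γ(y) \ {x}`. -/
def simRel {n : ℕ} (G : SimpleGraph (Fin n)) (x y : Fin n) : Prop :=
  G.neighborSet x \ {y} = G.neighborSet y \ {x}

/-- A set of consecutive vertices whose elements are pairwise `∼`-equivalent. -/
def IsHomInterval {n : ℕ} (G : SimpleGraph (Fin n)) (B : Set (Fin n)) : Prop :=
  B.OrdConnected ∧ ∀ x ∈ B, ∀ y ∈ B, simRel G x y

/-- A homogeneous block: a maximal nonempty set of consecutive vertices whose elements are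
pairwise `∼`-equivalent. -/
def IsHomBlock {n : ℕ} (G : SimpleGraph (Fin n)) (B : Set (Fin n)) : Prop :=
  B.Nonempty ∧ IsHomInterval G B ∧ ∀ C, IsHomInterval G C → B ⊆ C → B = C

open Classical in
/-- The excess `m(G) = Σ_{B : |B| ≥ 3} (|B| − 2)`, the sum over homogeneous blocks;
(truncated ℕ-subtraction makes blocks with `|B| ≤ 2` contribute `0`). -/
noncomputable def excess {n : ℕ} (G : SimpleGraph (Fin n)) : ℕ :=
  ∑ B ∈ Finset.univ.filter (fun B : Finset (Fin n) => IsHomBlock G ↑B), (B.card - 2)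

/-- Two ordered graphs have the same type. -/
def SameType {n n' : ℕ} (G : SimpleGraph (Fin n)) (G' : SimpleGraph (Fin n')) : Prop :=
  ∃ (k : ℕ) (B : Fin k → Set (Fin n)) (B' : Fin k → Set (Fin n')),
    (∀ i, IsHomBlock G (B i)) ∧ (∀ C, IsHomBlock G C → ∃ i, C = B i) ∧
    (∀ i j : Fin k, i < j → ∀ x ∈ B i, ∀ y ∈ B j, x < y) ∧
    (∀ i, IsHomBlock G' (B' i)) ∧ (∀ C, IsHomBlock G' C → ∃ i, C = B' i) ∧
    (∀ i j : Fin k, i < j → ∀ x ∈ B' i, ∀ y ∈ B' j, x < y) ∧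
    (∀ i j : Fin k, (∀ u ∈ B i, ∀ v ∈ B j, u ≠ v → G.Adj u v) ↔
            (∀ u ∈ B' i, ∀ v ∈ B' j, u ≠ v → G'.Adj u v)) ∧
    (∀ i, (B i).ncard = 1 ↔ (B' i).ncard = 1)

/-- The shadow within types `∂_τ G`. -/
def typeShadow {n : ℕ} (G : SimpleGraph (Fin n)) : Set (SimpleGraph (Fin (n - 1))) :=
  {H ∈ shadow G | SameType H G}

/-- The shadow within types `∂_τ 𝒢` of a collection. -/
def typeShadowCol {n : ℕ} (𝒢 : Set (SimpleGraph (Fin n))) : Set (SimpleGraph (Fin (n - 1))) :=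
  ⋃ G ∈ 𝒢, typeShadow G

/-- `Z^d(n) = {x ∈ ℤ^d : x_i ≥ 0, Σ_i x_i = n}`. -/
def Zdn (d n : ℕ) : Set (Fin d → ℤ) := {x | (∀ i, 0 ≤ x i) ∧ ∑ i, x i = (n : ℤ)}

/-- A line in `Z^d(n)`, determined by two coordinates `j, k`. -/
def ZLine (d n : ℕ) (j k : Fin d) : Set (Fin d → ℤ) :=
  {x ∈ Zdn d n | ∀ i, i ≠ j → i ≠ k → x i = 0}

/-- The shadow of a subset `A ⊆ Z^d(n)`. -/
def Zshadow (d n : ℕ) (A : Set (Fin d → ℤ)) : Set (Fin d → ℤ) :=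
  {x ∈ Zdn d (n - 1) | ∃ y ∈ A, ∀ i, x i ≤ y i}

/-- `phiAt G d x` : `x ∈ ℤ^d` is the image `φ(G)` of `G`, i.e. the homogeneous blocks of `G`
of size at least `2`, in increasing order, are `B_1 < ⋯ < B_d` and `x i = |B_i| − 2`. -/
def phiAt {n : ℕ} (G : SimpleGraph (Fin n)) (d : ℕ) (x : Fin d → ℤ) : Prop :=
  ∃ B : Fin d → Set (Fin n),
    (∀ i, IsHomBlock G (B i) ∧ 2 ≤ (B i).ncard) ∧
    (∀ C, IsHomBlock G C → 2 ≤ C.ncard → ∃ i, C = B i) ∧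
    (∀ i j : Fin d, i < j → ∀ u ∈ B i, ∀ v ∈ B j, u < v) ∧
    (∀ i, x i = ((B i).ncard : ℤ) - 2)

/-- `𝒢₀` (a set of ordered graphs of a common type, of common excess `m`) contains a line:
some subset `S ⊆ 𝒢₀` has `φ(S)` equal to a line in `Z^d(m)`. -/
def ContainsLine {n : ℕ} (𝒢₀ : Set (SimpleGraph (Fin n))) (m : ℕ) : Prop :=
  ∃ S ⊆ 𝒢₀, ∃ (d : ℕ) (j k : Fin d),
    {x : Fin d → ℤ | ∃ G ∈ S, phiAt G d x} = ZLine d m j k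

/-- `eraseSet G X` is `G − X`: delete all vertices of `X` and relabel order-preservingly. -/
noncomputable def eraseSet {n : ℕ} (G : SimpleGraph (Fin n)) (X : Finset (Fin n)) :
    SimpleGraph (Fin (n - X.card)) where
  Adj i j := G.Adj ((Xᶜ.orderIsoOfFin (by rw [Finset.card_compl, Fintype.card_fin]) i) : Fin n)
                   ((Xᶜ.orderIsoOfFin (by rw [Finset.card_compl, Fintype.card_fin]) j) : Fin n)
  symm := ⟨fun i j h => G.adj_symm h⟩
  loopless := ⟨fun i h => G.irrefl h⟩

/-- A semi-homogeneous block: a set `B` of consecutive vertices such that all vertices of `B`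
have the same neighbourhood outside `B`, and, for some `L ⊆ ℕ`, two vertices `x, y ∈ B` are
adjacent iff `|x − y| ∈ L`. -/
def IsSemiHomBlock {n : ℕ} (G : SimpleGraph (Fin n)) (B : Set (Fin n)) : Prop :=
  B.OrdConnected ∧
  (∀ x ∈ B, ∀ y ∈ B, G.neighborSet x \ B = G.neighborSet y \ B) ∧
  ∃ L : Set ℕ, ∀ x ∈ B, ∀ y ∈ B, (G.Adj x y ↔ ((x : ℤ) - (y : ℤ)).natAbs ∈ L)


/- Deleting `a ≤ b` relabels the vertices below `a` and above `b` in the same way, so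
`G − a = H − b` forces `G` and `H` to agree on every pair of vertices outside `[a, b]`. A vertex
lies in at most one of the three disjoint intervals `[aᵢ, bᵢ]`, so any two vertices both avoid
one of them. -/

theorem val_delMap {n : ℕ} (v : Fin n) (i : Fin (n - 1)) :
    (delMap v i : ℕ) = if (i : ℕ) < v then (i : ℕ) else i + 1 := by
  unfold delMap
  split_ifs <;> rfl

theorem erase_adj {n : ℕ} (G : SimpleGraph (Fin n)) (v : Fin n) (i j : Fin (n - 1)) :
    (erase G v).Adj i j ↔ G.Adj (delMap v i) (delMap v j) :=
  Iff.rfl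

theorem exists_delMap_eq_delMap_eq {n : ℕ} {a b w : Fin n} (hab : a ≤ b)
    (hw : w ∉ Set.Icc a b) : ∃ i, delMap a i = w ∧ delMap b i = w := by
  rw [Set.mem_Icc, not_and_or, not_le, not_le, Fin.lt_def, Fin.lt_def] at hw
  rw [Fin.le_def] at hab
  have := w.isLt
  rcases hw with hwa | hbw
  · refine ⟨⟨w, by omega⟩, ?_, ?_⟩ <;> ext <;> simp only [val_delMap] <;> split_ifs <;> omega
  · refine ⟨⟨w - 1, by omega⟩, ?_, ?_⟩ <;> ext <;> simp only [val_delMap] <;> split_ifs <;> omega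

theorem adj_iff_adj_of_erase_eq {n : ℕ} {G H : SimpleGraph (Fin n)} {a b u v : Fin n}
    (hab : a ≤ b) (e : erase G a = erase H b) (hu : u ∉ Set.Icc a b) (hv : v ∉ Set.Icc a b) :
    G.Adj u v ↔ H.Adj u v := by
  obtain ⟨i, hia, hib⟩ := exists_delMap_eq_delMap_eq hab hu
  obtain ⟨j, hja, hjb⟩ := exists_delMap_eq_delMap_eq hab hv
  calc G.Adj u v ↔ (erase G a).Adj i j := by rw [erase_adj, hia, hja]
    _ ↔ (erase H b).Adj i j := by rw [e]
    _ ↔ H.Adj u v := by rw [erase_adj, hib, hjb]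

theorem Icc_disjoint_Icc_of_lt {α : Type*} [Preorder α] {a₁ b₁ a₂ b₂ : α} (h : b₁ < a₂) :
    Disjoint (Set.Icc a₁ b₁) (Set.Icc a₂ b₂) :=
  Set.disjoint_left.2 fun _ hx hx' => (hx.2.trans_lt h).not_ge hx'.1

theorem exists_notMem_and_notMem {α : Type*} {S₁ S₂ S₃ : Set α} (h₁₂ : Disjoint S₁ S₂)
    (h₁₃ : Disjoint S₁ S₃) (h₂₃ : Disjoint S₂ S₃) (u v : α) :
    (u ∉ S₁ ∧ v ∉ S₁) ∨ (u ∉ S₂ ∧ v ∉ S₂) ∨ (u ∉ S₃ ∧ v ∉ S₃) := by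
  rw [Set.disjoint_left] at h₁₂ h₁₃ h₂₃
  have := @h₁₂ u; have := @h₁₂ v; have := @h₁₃ u; have := @h₁₃ v
  have := @h₂₃ u; have := @h₂₃ v
  tauto

/-- **Lemma (three disjoint intervals).** If `a₁ ≤ b₁ < a₂ ≤ b₂ < a₃ ≤ b₃` and
`G − aᵢ = H − bᵢ` for `i = 1, 2, 3`, then `G = H`. -/
theorem three_disjoint (n : ℕ) (G H : SimpleGraph (Fin n)) (a₁ b₁ a₂ b₂ a₃ b₃ : Fin n)
    (h₁ : a₁ ≤ b₁) (h₂ : b₁ < a₂) (h₃ : a₂ ≤ b₂) (h₄ : b₂ < a₃) (h₅ : a₃ ≤ b₃)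
    (e₁ : erase G a₁ = erase H b₁) (e₂ : erase G a₂ = erase H b₂)
    (e₃ : erase G a₃ = erase H b₃) :
    G = H := by
  have h₁₂ := Icc_disjoint_Icc_of_lt (a₁ := a₁) (b₂ := b₂) h₂
  have h₁₃ := Icc_disjoint_Icc_of_lt (a₁ := a₁) (b₂ := b₃) (h₂.trans_le (h₃.trans h₄.le))
  have h₂₃ := Icc_disjoint_Icc_of_lt (a₁ := a₂) (b₂ := b₃) h₄
  ext u v
  rcases exists_notMem_and_notMem h₁₂ h₁₃ h₂₃ u v with ⟨hu, hv⟩ | ⟨hu, hv⟩ | ⟨hu, hv⟩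
  · exact adj_iff_adj_of_erase_eq h₁ e₁ hu hv
  · exact adj_iff_adj_of_erase_eq h₃ e₂ hu hv
  · exact adj_iff_adj_of_erase_eq h₅ e₃ hu hv

end OrderedGraphs
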